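/- (Local linear convergence of gradient descent) Let x_⋆ ∈ ℝ^p, let K satisfy the kernel assumption, let δ > 0, let a_1, …, a_n ∈ ℝ^p be fixed vectors, and set b_i = (a_iᵀx_⋆)². Suppose there exist λ_s, ρ, μ_max > 0 such that: (i) F_δ(x) − F_δ(x_⋆) ≥ λ_s·min{Δ(x), Δ(x)²/δ} for all x ∈ ℝ^p; (ii) F_δ(y) − F_δ(x) ≥ ∇F_δ(x)ᵀ(y−x) − (ρ/2)‖y−x‖₂² for all x, y ∈ ℝ^p; and (iii) the operator norm of the Hessian of F_δ is at most μ_max/δ at every point. Let x_{k+1} = x_k − t·∇F_δ(x_k), k = 0, 1, 2, …, with step size t = δ/μ_max. If Δ(x_0) ≤ min{1, √(2λ_s/μ_max)}·δ and 0 < δ ≤ λ_s/ρ, then F_δ(x_{k+1}) − F_δ(x_⋆) ≤ (1 − λ_s/(8μ_max))·(F_δ(x_k) − F_δ(x_⋆)) for every k ∈ ℕ. -/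

import Mathlib

open MeasureTheory ProbabilityTheory
open scoped BigOperators RealInnerProductSpace Gradient

/-- The kernel assumption: `K` is a nonnegative, symmetric kernel integrating to one,
bounded, Lipschitz, positive at zero, and `x ↦ x * K x` is bounded, Lipschitz and
absolutely integrable. -/
structure IsGoodKernel (K : ℝ → ℝ) : Prop where
  nonneg : ∀ x, 0 ≤ K x
  symm : ∀ x, K x = K (-x)
  integral_one : (∫ x, K x) = 1
  bounded : ∃ B, ∀ x, |K x| ≤ B
  lipschitz : ∃ L : NNReal, LipschitzWith L K
  pos_at_zero : 0 < K 0
  bar_bounded : ∃ B, ∀ x, |x * K x| ≤ B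
  bar_lipschitz : ∃ L : NNReal, LipschitzWith L (fun x => x * K x)
  bar_integrable : Integrable (fun x => x * K x)

/-- The scaled kernel `K_δ(x) = (1/δ) K(x/δ)`. -/
noncomputable def scaledKernel (K : ℝ → ℝ) (δ : ℝ) (x : ℝ) : ℝ := (1 / δ) * K (x / δ)

/-- The convolution-type smoothed loss `l_δ(x) = ∫ |y| K_δ(x - y) dy`. -/
noncomputable def smoothedLoss (K : ℝ → ℝ) (δ : ℝ) (x : ℝ) : ℝ :=
  ∫ y, |y| * scaledKernel K δ (x - y)

/-- The smoothed empirical objective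
`F_δ(x) = (1/n) ∑ᵢ l_δ((aᵢᵀ x)² - bᵢ)`. -/
noncomputable def smoothedObj {p n : ℕ} (K : ℝ → ℝ) (δ : ℝ)
    (a : Fin n → EuclideanSpace ℝ (Fin p)) (b : Fin n → ℝ)
    (x : EuclideanSpace ℝ (Fin p)) : ℝ :=
  (n : ℝ)⁻¹ * ∑ i, smoothedLoss K δ ((⟪a i, x⟫) ^ 2 - b i)

/-- `Δ(x) = min(‖x - x⋆‖, ‖x + x⋆‖)`, the distance to the pair of true signals. -/
noncomputable def distSig {p : ℕ} (xs x : EuclideanSpace ℝ (Fin p)) : ℝ :=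
  min ‖x - xs‖ ‖x + xs‖

/-- The standard Gaussian measure `N(0, I_p)` on `EuclideanSpace ℝ (Fin p)`. -/
noncomputable def stdGaussian (p : ℕ) : Measure (EuclideanSpace ℝ (Fin p)) :=
  Measure.map (MeasurableEquiv.toLp 2 (Fin p → ℝ))
    (Measure.pi fun _ => gaussianReal 0 1)

/-- `a` is a family of i.i.d. standard Gaussian random vectors in `ℝ^p`. -/
def IsIIDStdGaussian {Ω : Type*} [MeasurableSpace Ω] (P : Measure Ω) {p : ℕ} {ι : Type*}
    (a : ι → Ω → EuclideanSpace ℝ (Fin p)) : Prop :=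
  (∀ i, Measurable (a i)) ∧
  iIndepFun a P ∧
  (∀ i, Measure.map (a i) P = stdGaussian p)

/-!
The Hessian bound makes `∇F_δ` Lipschitz with constant `L = μmax/δ`, so by the descent lemma a
gradient step of length `1/L` lowers `F_δ` by at least `‖∇F_δ‖²/(2L)`. As `F_δ` is even, both `±x⋆`
are global minimizers (by sharpness) with vanishing gradient, and the descent lemma around them
gives `F_δ(x) - F_δ(x⋆) ≤ (L/2) Δ(x)²`; the assumption on `x₀` then bounds the initial gap by
`λ_s δ`. While the gap stays below `λ_s δ`, sharpness is in its quadratic regime,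
`λ_s Δ² ≤ δ (F_δ - F_δ(x⋆))`, and combined with `ρ`-weak convexity and `δρ ≤ λ_s` this yields the
local Polyak–Łojasiewicz inequality `λ_s (F_δ - F_δ(x⋆)) ≤ 4δ ‖∇F_δ‖²`. So each step contracts the
gap by `1 - λ_s/(8 μmax)`, which by induction keeps it below `λ_s δ`.
-/

theorem hasDerivAt_integral_Iic {g : ℝ → ℝ} (hg : Integrable g) (hgc : Continuous g) (x : ℝ) :
    HasDerivAt (fun u => ∫ z in Set.Iic u, g z) (g x) x := by
  have hsplit : ∀ u, ∫ z in Set.Iic u, g z = (∫ z in Set.Iic 0, g z) + ∫ z in (0 : ℝ)..u, g z :=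
    fun u => by
      rw [← intervalIntegral.integral_Iic_sub_Iic hg.integrableOn hg.integrableOn]
      ring
  exact ((intervalIntegral.integral_hasDerivAt_right hg.intervalIntegrable
    (hgc.stronglyMeasurableAtFilter _ _) hgc.continuousAt).const_add _).congr_of_eventuallyEq
    (.of_forall hsplit)

section SmoothDescent

open Set

variable {E : Type*} [NormedAddCommGroup E] [NormedSpace ℝ E]

theorem norm_fderiv_sub_le_of_norm_iteratedFDeriv_two_le
    {F : Type*} [NormedAddCommGroup F] [NormedSpace ℝ F] {f : E → F} (hf : ContDiff ℝ 2 f)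
    {C : ℝ} (hC : ∀ x, ‖iteratedFDeriv ℝ 2 f x‖ ≤ C) (x y : E) :
    ‖fderiv ℝ f x - fderiv ℝ f y‖ ≤ C * ‖x - y‖ := by
  have hdiff : Differentiable ℝ (fderiv ℝ f) :=
    (hf.fderiv_right (m := 1) le_rfl).differentiable one_ne_zero
  refine convex_univ.norm_image_sub_le_of_norm_fderiv_le (fun z _ => hdiff z)
    (fun z _ => ?_) (mem_univ y) (mem_univ x)
  calc ‖fderiv ℝ (fderiv ℝ f) z‖ = ‖iteratedFDeriv ℝ 2 f z‖ :=
        (norm_iteratedFDeriv_one _ (x := z)).symm.trans norm_iteratedFDeriv_fderiv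
    _ ≤ C := hC z

theorem image_add_le_of_norm_fderiv_sub_le {f : E → ℝ} (hf : Differentiable ℝ f) {L : ℝ}
    (hL : ∀ x y, ‖fderiv ℝ f x - fderiv ℝ f y‖ ≤ L * ‖x - y‖) (x v : E) :
    f (x + v) ≤ f x + fderiv ℝ f x v + L / 2 * ‖v‖ ^ 2 := by
  have hline : ∀ t : ℝ, HasDerivAt (fun s : ℝ => f (x + s • v)) (fderiv ℝ f (x + t • v) v) t :=
    fun t => (hf _).hasFDerivAt.comp_hasDerivAt t
      (((hasDerivAt_id t).smul_const v).const_add x |>.congr_deriv (one_smul ℝ v))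
  have hbound : ∀ t : ℝ,
      HasDerivAt (fun s : ℝ => f x + s * fderiv ℝ f x v + L / 2 * ‖v‖ ^ 2 * s ^ 2)
        (fderiv ℝ f x v + L * t * ‖v‖ ^ 2) t := fun t =>
    (((hasDerivAt_id' t).mul_const _).const_add (f x)).add
      ((hasDerivAt_pow 2 t).const_mul _) |>.congr_deriv (by norm_num; ring)
  have hderiv_le : ∀ t ∈ Ico (0 : ℝ) 1,
      fderiv ℝ f (x + t • v) v ≤ fderiv ℝ f x v + L * t * ‖v‖ ^ 2 := fun t ht =>
    calc fderiv ℝ f (x + t • v) v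
        = fderiv ℝ f x v + (fderiv ℝ f (x + t • v) - fderiv ℝ f x) v := by simp
      _ ≤ fderiv ℝ f x v + ‖fderiv ℝ f (x + t • v) - fderiv ℝ f x‖ * ‖v‖ :=
          add_le_add_right ((Real.le_norm_self _).trans (ContinuousLinearMap.le_opNorm _ v)) _
      _ ≤ fderiv ℝ f x v + L * ‖t • v‖ * ‖v‖ := by
          gcongr; simpa using hL (x + t • v) x
      _ = fderiv ℝ f x v + L * t * ‖v‖ ^ 2 := by
          rw [norm_smul, Real.norm_of_nonneg ht.1]; ring
  -- compare `t ↦ f (x + t • v)` on `[0, 1]` with the parabola having its value and slope at `0`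
  simpa using image_le_of_deriv_right_le_deriv_boundary
    (fun t _ => (hline t).continuousAt.continuousWithinAt) (fun t _ => (hline t).hasDerivWithinAt)
    (by simp) (fun t _ => (hbound t).continuousAt.continuousWithinAt)
    (fun t _ => (hbound t).hasDerivWithinAt) hderiv_le (right_mem_Icc.2 zero_le_one)

end SmoothDescent

section GradientStep

variable {E : Type*} [NormedAddCommGroup E] [InnerProductSpace ℝ E] [CompleteSpace E]

theorem image_sub_smul_gradient_le {f : E → ℝ} (hf : Differentiable ℝ f) {t : ℝ}
    (hL : ∀ x y, ‖fderiv ℝ f x - fderiv ℝ f y‖ ≤ t⁻¹ * ‖x - y‖) (x : E) :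
    f (x - t • ∇ f x) ≤ f x - t / 2 * ‖∇ f x‖ ^ 2 := by
  have h := image_add_le_of_norm_fderiv_sub_le hf hL x (-(t • ∇ f x))
  rw [← inner_gradient_left, inner_neg_right, real_inner_smul_right, real_inner_self_eq_norm_sq,
    norm_neg, norm_smul, mul_pow, Real.norm_eq_abs, sq_abs, ← sub_eq_add_neg] at h
  calc f (x - t • ∇ f x) ≤ _ := h
    _ = f x - t / 2 * ‖∇ f x‖ ^ 2 := by
      rcases eq_or_ne t 0 with rfl | ht
      · simp
      · field_simp; ring

def IsWeaklyConvex (ρ : ℝ) (f : E → ℝ) : Prop :=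
  ∀ x y, ⟪∇ f x, y - x⟫ - ρ / 2 * ‖y - x‖ ^ 2 ≤ f y - f x

end GradientStep

namespace IsGoodKernel

open Set

variable {K : ℝ → ℝ} {δ : ℝ}

theorem integrable (hK : IsGoodKernel K) : Integrable K :=
  Integrable.of_integral_ne_zero (by rw [hK.integral_one]; exact one_ne_zero)

theorem continuous (hK : IsGoodKernel K) : Continuous K :=
  hK.lipschitz.choose_spec.continuous

theorem continuous_scaledKernel (hK : IsGoodKernel K) : Continuous (scaledKernel K δ) :=
  continuous_const.mul (hK.continuous.comp (continuous_id.div_const δ))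

theorem scaledKernel_nonneg (hK : IsGoodKernel K) (hδ : 0 ≤ δ) (x : ℝ) :
    0 ≤ scaledKernel K δ x :=
  mul_nonneg (by positivity) (hK.nonneg _)

theorem integrable_scaledKernel (hK : IsGoodKernel K) (hδ : δ ≠ 0) :
    Integrable (scaledKernel K δ) :=
  (hK.integrable.comp_div hδ).const_mul _

theorem integral_scaledKernel (hK : IsGoodKernel K) (hδ : 0 < δ) :
    ∫ x, scaledKernel K δ x = 1 := by
  unfold scaledKernel
  rw [integral_const_mul, Measure.integral_comp_div K δ, hK.integral_one,
    abs_of_pos hδ]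
  simp [hδ.ne']

theorem integrable_mul_scaledKernel (hK : IsGoodKernel K) (hδ : δ ≠ 0) :
    Integrable (fun z => z * scaledKernel K δ z) := by
  have h : (fun z => z * scaledKernel K δ z) = fun z => (z / δ) * K (z / δ) := by
    ext z; rw [scaledKernel]; field_simp
  exact h ▸ hK.bar_integrable.comp_div hδ

theorem integrable_abs_sub_mul_scaledKernel (hK : IsGoodKernel K) (hδ : 0 < δ) (x : ℝ) :
    Integrable (fun z => |x - z| * scaledKernel K δ z) := by
  refine Integrable.mono' ((hK.integrable_scaledKernel hδ.ne' |>.const_mul |x|).add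
    (hK.integrable_mul_scaledKernel hδ.ne').abs)
    ((continuous_const.sub continuous_id).abs.mul hK.continuous_scaledKernel).aestronglyMeasurable
    (Filter.Eventually.of_forall fun z => ?_)
  have hk := hK.scaledKernel_nonneg hδ.le z
  rw [Pi.add_apply, Real.norm_of_nonneg (mul_nonneg (abs_nonneg _) hk), abs_mul,
    abs_of_nonneg hk, ← add_mul]
  exact mul_le_mul_of_nonneg_right (abs_sub x z) hk

theorem smoothedLoss_eq_integral_abs_sub (x : ℝ) :
    smoothedLoss K δ x = ∫ z, |x - z| * scaledKernel K δ z := by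
  rw [smoothedLoss, ← integral_sub_left_eq_self _ volume x]
  simp

/-- Differentiation under the integral sign: `∂ₓ|x - z| = ±1` off the null set `{z = x}`. -/
theorem hasDerivAt_smoothedLoss (hK : IsGoodKernel K) (hδ : 0 < δ) (x₀ : ℝ) :
    HasDerivAt (smoothedLoss K δ) (2 * (∫ z in Iic x₀, scaledKernel K δ z) - 1) x₀ := by
  set g := scaledKernel K δ
  have hg : Integrable g := hK.integrable_scaledKernel hδ.ne'
  have hgc : Continuous g := hK.continuous_scaledKernel
  have hsign : ∀ z, z ≠ x₀ → HasDerivAt (fun x => |x - z| * g z)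
      (2 * (Iio x₀).indicator g z - g z) x₀ := by
    intro z hz
    rcases hz.lt_or_gt with h | h
    · have hd := ((hasDerivAt_abs_pos (sub_pos.2 h)).comp x₀
        ((hasDerivAt_id x₀).sub_const z)).mul_const (g z)
      simpa [indicator_of_mem (show z ∈ Iio x₀ from h), two_mul] using hd
    · have hd := ((hasDerivAt_abs_neg (sub_neg.2 h)).comp x₀
        ((hasDerivAt_id x₀).sub_const z)).mul_const (g z)
      simpa [indicator_of_notMem (show z ∉ Iio x₀ from not_lt.2 h.le)] using hd
  have hlip : ∀ z, LipschitzOnWith (Real.nnabs (g z)) (fun x => |x - z| * g z) univ := by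
    intro z
    refine (LipschitzWith.of_dist_le_mul fun u v => ?_).lipschitzOnWith
    rw [Real.dist_eq, Real.dist_eq, Real.coe_nnabs, ← sub_mul, abs_mul, mul_comm]
    refine mul_le_mul_of_nonneg_left ?_ (abs_nonneg _)
    simpa using abs_abs_sub_abs_le_abs_sub (u - z) (v - z)
  obtain ⟨-, hderiv⟩ := hasDerivAt_integral_of_dominated_loc_of_lip
    (F := fun x z => |x - z| * g z) (F' := fun z => 2 * (Iio x₀).indicator g z - g z)
    (bound := g) Filter.univ_mem
    (Filter.Eventually.of_forall fun x =>
      ((continuous_const.sub continuous_id).abs.mul hgc).aestronglyMeasurable)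
    (hK.integrable_abs_sub_mul_scaledKernel hδ x₀)
    (((measurable_const.mul (hgc.measurable.indicator measurableSet_Iio)).sub
      hgc.measurable).aestronglyMeasurable)
    (Filter.Eventually.of_forall hlip) hg
    ((Measure.ae_ne volume x₀).mono hsign)
  rw [funext (smoothedLoss_eq_integral_abs_sub (K := K) (δ := δ))]
  rwa [integral_sub ((hg.indicator measurableSet_Iio).const_mul 2) hg, integral_const_mul,
    integral_indicator measurableSet_Iio, hK.integral_scaledKernel hδ,
    ← integral_Iic_eq_integral_Iio] at hderiv

theorem contDiff_smoothedLoss (hK : IsGoodKernel K) (hδ : 0 < δ) :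
    ContDiff ℝ 2 (smoothedLoss K δ) := by
  have hderiv : deriv (smoothedLoss K δ) = fun u => 2 * (∫ z in Iic u, scaledKernel K δ z) - 1 :=
    funext fun x => (hK.hasDerivAt_smoothedLoss hδ x).deriv
  have hderiv2 : ∀ x, HasDerivAt (deriv (smoothedLoss K δ)) (2 * scaledKernel K δ x) x :=
    fun x => hderiv ▸ ((hasDerivAt_integral_Iic (hK.integrable_scaledKernel hδ.ne')
      hK.continuous_scaledKernel x).const_mul 2).sub_const 1
  rw [show (2 : WithTop ℕ∞) = 1 + 1 from rfl, contDiff_succ_iff_deriv, contDiff_one_iff_deriv]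
  refine ⟨fun x => (hK.hasDerivAt_smoothedLoss hδ x).differentiableAt, by simp,
    fun x => (hderiv2 x).differentiableAt, ?_⟩
  rw [funext fun x => (hderiv2 x).deriv]
  exact continuous_const.mul hK.continuous_scaledKernel

end IsGoodKernel

theorem contDiff_smoothedObj {K : ℝ → ℝ} (hK : IsGoodKernel K) {δ : ℝ} (hδ : 0 < δ) {p n : ℕ}
    (a : Fin n → EuclideanSpace ℝ (Fin p)) (b : Fin n → ℝ) :
    ContDiff ℝ 2 (smoothedObj K δ a b) :=
  contDiff_const.mul <| ContDiff.sum fun i _ =>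
    (hK.contDiff_smoothedLoss hδ).comp (((innerSL ℝ (a i)).contDiff.pow 2).sub contDiff_const)

theorem smoothedObj_neg {p n : ℕ} (K : ℝ → ℝ) (δ : ℝ) (a : Fin n → EuclideanSpace ℝ (Fin p))
    (b : Fin n → ℝ) (x : EuclideanSpace ℝ (Fin p)) :
    smoothedObj K δ a b (-x) = smoothedObj K δ a b x := by
  simp only [smoothedObj, inner_neg_right, neg_sq]

section PhaseRetrieval

variable {p : ℕ} {F : EuclideanSpace ℝ (Fin p) → ℝ} {xs x : EuclideanSpace ℝ (Fin p)}
  {δ lams ρ μmax : ℝ}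

def IsSharp (xs : EuclideanSpace ℝ (Fin p)) (δ lams : ℝ) (F : EuclideanSpace ℝ (Fin p) → ℝ) :
    Prop :=
  ∀ x, lams * min (distSig xs x) (distSig xs x ^ 2 / δ) ≤ F x - F xs

theorem distSig_nonneg (xs x : EuclideanSpace ℝ (Fin p)) : 0 ≤ distSig xs x :=
  le_min (norm_nonneg _) (norm_nonneg _)

theorem exists_norm_sub_eq_distSig (xs x : EuclideanSpace ℝ (Fin p)) :
    ∃ y, (y = xs ∨ y = -xs) ∧ ‖x - y‖ = distSig xs x := by
  rcases le_total ‖x - xs‖ ‖x + xs‖ with h | h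
  · exact ⟨xs, .inl rfl, (min_eq_left h).symm⟩
  · exact ⟨-xs, .inr rfl, by rw [sub_neg_eq_add, distSig, min_eq_right h]⟩

theorem IsSharp.isMinOn (hsharp : IsSharp xs δ lams F) (hδ : 0 ≤ δ) (hlams : 0 ≤ lams) :
    IsMinOn F Set.univ xs := fun x _ => by
  have hmin : 0 ≤ lams * min (distSig xs x) (distSig xs x ^ 2 / δ) :=
    mul_nonneg hlams (le_min (distSig_nonneg xs x) (by positivity))
  exact sub_nonneg.1 (hmin.trans (hsharp x))

theorem IsSharp.mul_sq_distSig_le (hsharp : IsSharp xs δ lams F) (hδ : 0 < δ)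
    (hgap : F x - F xs ≤ lams * δ) :
    lams * distSig xs x ^ 2 ≤ δ * (F x - F xs) := by
  have hΔ := distSig_nonneg xs x
  have h := hsharp x
  rcases min_cases (distSig xs x) (distSig xs x ^ 2 / δ) with ⟨hmin, -⟩ | ⟨hmin, -⟩ <;>
    rw [hmin] at h
  · nlinarith [mul_le_mul_of_nonneg_left h hΔ]
  · rwa [mul_div_assoc', div_le_iff₀' hδ] at h

theorem IsWeaklyConvex.sub_sub_le_norm_gradient_mul_distSig (hweak : IsWeaklyConvex ρ F)
    (hsym : F (-xs) = F xs) (x : EuclideanSpace ℝ (Fin p)) :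
    F x - F xs - ρ / 2 * distSig xs x ^ 2 ≤ ‖∇ F x‖ * distSig xs x := by
  obtain ⟨y, hy, hdist⟩ := exists_norm_sub_eq_distSig xs x
  have hFy : F y = F xs := by rcases hy with rfl | rfl <;> simp [hsym]
  have h := hweak x y
  rw [norm_sub_rev, hdist, hFy] at h
  have hinner : -(‖∇ F x‖ * distSig xs x) ≤ ⟪∇ F x, y - x⟫ := by
    rw [← hdist, norm_sub_rev]
    exact neg_le_of_abs_le (abs_real_inner_le_norm _ _)
  linarith

theorem sub_le_sq_distSig_of_norm_fderiv_sub_le (hF : Differentiable ℝ F) {L : ℝ}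
    (hL : ∀ x y, ‖fderiv ℝ F x - fderiv ℝ F y‖ ≤ L * ‖x - y‖) (hmin : IsMinOn F Set.univ xs)
    (hsym : F (-xs) = F xs) (x : EuclideanSpace ℝ (Fin p)) :
    F x - F xs ≤ L / 2 * distSig xs x ^ 2 := by
  obtain ⟨y, hy, hdist⟩ := exists_norm_sub_eq_distSig xs x
  have hFy : F y = F xs := by rcases hy with rfl | rfl <;> simp [hsym]
  have hminy : IsMinOn F Set.univ y := fun z hz => hFy ▸ hmin hz
  have h := image_add_le_of_norm_fderiv_sub_le hF hL y (x - y)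
  rw [add_sub_cancel, (hminy.isLocalMin Filter.univ_mem).fderiv_eq_zero, hdist, hFy,
    zero_apply, add_zero] at h
  linarith

/-- A local Polyak–Łojasiewicz inequality. -/
theorem IsSharp.mul_sub_le_sq_norm_gradient (hsharp : IsSharp xs δ lams F)
    (hweak : IsWeaklyConvex ρ F) (hsym : F (-xs) = F xs) (hδ : 0 < δ) (hlams : 0 < lams)
    (hρδ : δ * ρ ≤ lams) (hgap : F x - F xs ≤ lams * δ) :
    lams * (F x - F xs) ≤ 4 * δ * ‖∇ F x‖ ^ 2 := by
  set G := F x - F xs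
  set Δ := distSig xs x
  have hG : 0 ≤ G := sub_nonneg.2 (hsharp.isMinOn hδ.le hlams.le (Set.mem_univ x))
  have hquad : lams * Δ ^ 2 ≤ δ * G := hsharp.mul_sq_distSig_le hδ hgap
  have hρΔ : ρ * Δ ^ 2 ≤ G := by
    rcases le_total ρ 0 with hρ | hρ
    · nlinarith [sq_nonneg Δ]
    · exact le_of_mul_le_mul_left (by nlinarith [mul_le_mul_of_nonneg_left hquad hρ]) hlams
  have hgrad : G / 2 ≤ ‖∇ F x‖ * Δ := by
    linarith [hweak.sub_sub_le_norm_gradient_mul_distSig hsym x]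
  have hsq : G ^ 2 ≤ 4 * ‖∇ F x‖ ^ 2 * Δ ^ 2 := by nlinarith
  rcases hG.eq_or_lt with hG0 | hGpos
  · rw [← hG0, mul_zero]; positivity
  · refine le_of_mul_le_mul_right ?_ hGpos
    nlinarith [mul_le_mul_of_nonneg_left hquad (sq_nonneg ‖∇ F x‖)]

theorem IsSharp.sub_le_mul_sub_of_descent_step (hsharp : IsSharp xs δ lams F)
    (hweak : IsWeaklyConvex ρ F) (hsym : F (-xs) = F xs) (hδ : 0 < δ) (hlams : 0 < lams)
    (hμmax : 0 < μmax) (hρδ : δ * ρ ≤ lams) (hgap : F x - F xs ≤ lams * δ)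
    {x' : EuclideanSpace ℝ (Fin p)} (hstep : F x' ≤ F x - δ / μmax / 2 * ‖∇ F x‖ ^ 2) :
    F x' - F xs ≤ (1 - lams / (8 * μmax)) * (F x - F xs) := by
  have hPL := hsharp.mul_sub_le_sq_norm_gradient hweak hsym hδ hlams hρδ hgap
  calc F x' - F xs ≤ F x - F xs - δ / μmax / 2 * ‖∇ F x‖ ^ 2 := by linarith
    _ ≤ F x - F xs - lams * (F x - F xs) / (8 * μmax) := by
      gcongr
      rw [div_le_iff₀ (by positivity)]
      field_simp
      linarith
    _ = (1 - lams / (8 * μmax)) * (F x - F xs) := by ring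

theorem IsSharp.sub_le_mul_sub_of_gradientDescent (hsharp : IsSharp xs δ lams F)
    (hweak : IsWeaklyConvex ρ F) (hsym : F (-xs) = F xs) (hF : Differentiable ℝ F)
    (hL : ∀ x y, ‖fderiv ℝ F x - fderiv ℝ F y‖ ≤ μmax / δ * ‖x - y‖)
    (hδ : 0 < δ) (hlams : 0 < lams) (hμmax : 0 < μmax) (hρδ : δ * ρ ≤ lams)
    (x : ℕ → EuclideanSpace ℝ (Fin p)) (hiter : ∀ k, x (k + 1) = x k - (δ / μmax) • ∇ F (x k))
    (hgap : F (x 0) - F xs ≤ lams * δ) (k : ℕ) :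
    F (x (k + 1)) - F xs ≤ (1 - lams / (8 * μmax)) * (F (x k) - F xs) := by
  have hstep : ∀ k, F (x (k + 1)) ≤ F (x k) - δ / μmax / 2 * ‖∇ F (x k)‖ ^ 2 := fun k =>
    hiter k ▸ image_sub_smul_gradient_le hF (by simpa only [inv_div] using hL) (x k)
  have hcontract : ∀ k, F (x k) - F xs ≤ lams * δ →
      F (x (k + 1)) - F xs ≤ (1 - lams / (8 * μmax)) * (F (x k) - F xs) := fun k hk =>
    hsharp.sub_le_mul_sub_of_descent_step hweak hsym hδ hlams hμmax hρδ hk (hstep k)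
  have hinv : ∀ k, F (x k) - F xs ≤ lams * δ := by
    intro k
    induction k with
    | zero => exact hgap
    | succ k ih =>
      have hG : 0 ≤ F (x k) - F xs := sub_nonneg.2 (hsharp.isMinOn hδ.le hlams.le trivial)
      have hfactor : 0 ≤ lams / (8 * μmax) := by positivity
      nlinarith [hcontract k ih]
  exact hcontract k (hinv k)

end PhaseRetrieval

theorem gradient_descent_local_linear_convergence_general
    {p n : ℕ} (xs : EuclideanSpace ℝ (Fin p))
    (K : ℝ → ℝ) (hK : IsGoodKernel K) (δ : ℝ) (hδ : 0 < δ)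
    (a : Fin n → EuclideanSpace ℝ (Fin p)) (b : Fin n → ℝ)
    (lams ρ μmax : ℝ) (hlams : 0 < lams) (hρ : 0 < ρ) (hμmax : 0 < μmax)
    (hsharp : ∀ x : EuclideanSpace ℝ (Fin p),
      lams * min (distSig xs x) ((distSig xs x) ^ 2 / δ) ≤
        smoothedObj K δ a b x - smoothedObj K δ a b xs)
    (hweak : ∀ x y : EuclideanSpace ℝ (Fin p),
      ⟪∇ (smoothedObj K δ a b) x, y - x⟫ - ρ / 2 * ‖y - x‖ ^ 2 ≤
        smoothedObj K δ a b y - smoothedObj K δ a b x)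
    (hhess : ∀ x : EuclideanSpace ℝ (Fin p),
      ‖iteratedFDeriv ℝ 2 (smoothedObj K δ a b) x‖ ≤ μmax / δ)
    (x : ℕ → EuclideanSpace ℝ (Fin p))
    (hiter : ∀ k : ℕ, x (k + 1) = x k - (δ / μmax) • ∇ (smoothedObj K δ a b) (x k))
    (hinit : distSig xs (x 0) ≤ min 1 (Real.sqrt (2 * lams / μmax)) * δ)
    (hδle : δ ≤ lams / ρ) :
    ∀ k : ℕ,
      smoothedObj K δ a b (x (k + 1)) - smoothedObj K δ a b xs ≤
        (1 - lams / (8 * μmax)) *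
          (smoothedObj K δ a b (x k) - smoothedObj K δ a b xs) := by
  set F := smoothedObj K δ a b
  have hsharp : IsSharp xs δ lams F := hsharp
  have hF : ContDiff ℝ 2 F := contDiff_smoothedObj hK hδ a b
  have hdiff : Differentiable ℝ F := hF.differentiable two_ne_zero
  have hL := norm_fderiv_sub_le_of_norm_iteratedFDeriv_two_le hF hhess
  have hsym : F (-xs) = F xs := smoothedObj_neg K δ a b xs
  have hinit' : distSig xs (x 0) ^ 2 ≤ 2 * lams / μmax * δ ^ 2 := by
    calc distSig xs (x 0) ^ 2 ≤ (Real.sqrt (2 * lams / μmax) * δ) ^ 2 :=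
          pow_le_pow_left₀ (distSig_nonneg _ _)
            (hinit.trans (mul_le_mul_of_nonneg_right (min_le_right _ _) hδ.le)) 2
      _ = 2 * lams / μmax * δ ^ 2 := by rw [mul_pow, Real.sq_sqrt (by positivity)]
  have hgap : F (x 0) - F xs ≤ lams * δ := by
    calc F (x 0) - F xs ≤ μmax / δ / 2 * distSig xs (x 0) ^ 2 :=
          sub_le_sq_distSig_of_norm_fderiv_sub_le hdiff hL (hsharp.isMinOn hδ.le hlams.le) hsym _
      _ ≤ μmax / δ / 2 * (2 * lams / μmax * δ ^ 2) := by gcongr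
      _ = lams * δ := by field_simp
  exact hsharp.sub_le_mul_sub_of_gradientDescent hweak hsym hdiff hL hδ hlams hμmax
    ((le_div_iff₀ hρ).mp hδle) x hiter hgap

/-- Local linear convergence of gradient descent. Assuming generalized
sharpness, weak convexity, and the uniform Hessian bound `μmax/δ`, gradient descent with
step size `t = δ/μmax` started with `Δ(x₀) ≤ min{1, √(2λ_s/μmax)} δ` (and `δ ≤ λ_s/ρ`)
contracts the objective gap by the factor `1 - λ_s/(8 μmax)` at every iteration. -/
theorem gradient_descent_local_linear_convergence
    {p n : ℕ} (xs : EuclideanSpace ℝ (Fin p))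
    (K : ℝ → ℝ) (hK : IsGoodKernel K) (δ : ℝ) (hδ : 0 < δ)
    (a : Fin n → EuclideanSpace ℝ (Fin p)) (b : Fin n → ℝ)
    (hb : ∀ i, b i = (⟪a i, xs⟫) ^ 2)
    (lams ρ μmax : ℝ) (hlams : 0 < lams) (hρ : 0 < ρ) (hμmax : 0 < μmax)
    (hsharp : ∀ x : EuclideanSpace ℝ (Fin p),
      lams * min (distSig xs x) ((distSig xs x) ^ 2 / δ) ≤
        smoothedObj K δ a b x - smoothedObj K δ a b xs)
    (hweak : ∀ x y : EuclideanSpace ℝ (Fin p),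
      ⟪∇ (smoothedObj K δ a b) x, y - x⟫ - ρ / 2 * ‖y - x‖ ^ 2 ≤
        smoothedObj K δ a b y - smoothedObj K δ a b x)
    (hhess : ∀ x : EuclideanSpace ℝ (Fin p),
      ‖iteratedFDeriv ℝ 2 (smoothedObj K δ a b) x‖ ≤ μmax / δ)
    (x : ℕ → EuclideanSpace ℝ (Fin p))
    (hiter : ∀ k : ℕ, x (k + 1) = x k - (δ / μmax) • ∇ (smoothedObj K δ a b) (x k))
    (hinit : distSig xs (x 0) ≤ min 1 (Real.sqrt (2 * lams / μmax)) * δ)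
    (hδle : δ ≤ lams / ρ) :
    ∀ k : ℕ,
      smoothedObj K δ a b (x (k + 1)) - smoothedObj K δ a b xs ≤
        (1 - lams / (8 * μmax)) *
          (smoothedObj K δ a b (x k) - smoothedObj K δ a b xs) :=
  gradient_descent_local_linear_convergence_general xs K hK δ hδ a b lams ρ μmax hlams hρ hμmax
    hsharp hweak hhess x hiter hinit hδle
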